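/- arXiv:2310.03482 — 8 statements merged into one kernel-verified Lean document; each statement's English description precedes it below -/
import Mathlib

section
/- Let T(x) = ReLU(Ax + b) with A invertible, let A_b(x) = Ax + b, and let π be the sector-wise cone projection defined by π(x_0 + Σ_{i∈I_+} α_i a*_i − Σ_{i∈I_-} α_i a*_i) = x_0 + Σ_{i∈I_+} α_i a*_i. Then T = A_b ∘ π, i.e., ReLU ∘ A_b = A_b ∘ π. -/
open Matrix Finset

noncomputable def relu {d : ℕ} (y : Fin d → ℝ) : Fin d → ℝ := fun i => max (y i) 0

def sector {d : ℕ} (x₀ : Fin d → ℝ) (astar : Fin d → Fin d → ℝ)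
    (Ip Im : Finset (Fin d)) : Set (Fin d → ℝ) :=
  { x | ∃ α : Fin d → ℝ,
      (∀ i ∈ Ip ∪ Im, 0 < α i) ∧
      x = x₀ + ∑ i ∈ Ip, α i • astar i - ∑ i ∈ Im, α i • astar i }

def canonicalSector {d : ℕ} (J : Finset (Fin d)) : Set (Fin d → ℝ) :=
  { y | ∃ β : Fin d → ℝ, (∀ i ∈ J, 0 < β i) ∧
      y = ∑ i ∈ J, β i • (Pi.single i (1:ℝ) : Fin d → ℝ) }

theorem stmt8 {d : ℕ} (A : Matrix (Fin d) (Fin d) ℝ) (hA : IsUnit A.det)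
    (b : Fin d → ℝ) (x₀ : Fin d → ℝ) (hx₀ : x₀ = -(A⁻¹.mulVec b))
    (astar : Fin d → Fin d → ℝ)
    (hdual : ∀ i j, A j ⬝ᵥ astar i = if i = j then 1 else 0)
    (proj : (Fin d → ℝ) → (Fin d → ℝ))
    (hproj : ∀ Ip Im : Finset (Fin d), Disjoint Ip Im → ∀ α : Fin d → ℝ,
      (∀ i ∈ Ip ∪ Im, 0 < α i) →
      proj (x₀ + ∑ i ∈ Ip, α i • astar i - ∑ i ∈ Im, α i • astar i)
        = x₀ + ∑ i ∈ Ip, α i • astar i) :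
    ∀ x : Fin d → ℝ, relu (A.mulVec x + b) = A.mulVec (proj x) + b := by
  intro x
  set c : Fin d → ℝ := A.mulVec x + b with hc
  have hsingle : ∀ i, A.mulVec (astar i) = Pi.single i (1:ℝ) := by
    intro i
    funext j
    simp only [Matrix.mulVec]
    rw [hdual, Pi.single_apply]
    simp [eq_comm]
  have hx0 : A.mulVec x₀ = -b := by
    rw [hx₀, Matrix.mulVec_neg, Matrix.mulVec_mulVec, Matrix.mul_nonsing_inv A hA,
      Matrix.one_mulVec]
  have hAsumgen : ∀ (s : Finset (Fin d)) (f : Fin d → ℝ),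
      A.mulVec (∑ i ∈ s, f i • astar i) = ∑ i ∈ s, f i • (Pi.single i (1:ℝ) : Fin d → ℝ) := by
    intro s f
    rw [show A.mulVec = A.mulVecLin from rfl, map_sum]
    refine Finset.sum_congr rfl fun i _ => ?_
    rw [LinearMap.map_smul, ← show A.mulVec = A.mulVecLin from rfl, hsingle]
  have hsingleval : ∀ (s : Finset (Fin d)) (f : Fin d → ℝ) (j : Fin d),
      (∑ i ∈ s, f i • (Pi.single i (1:ℝ) : Fin d → ℝ)) j = if j ∈ s then f j else 0 := by
    intro s f j
    rw [Finset.sum_apply]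
    by_cases hj : j ∈ s
    · rw [Finset.sum_eq_single_of_mem j hj, if_pos hj]
      · simp
      · intro i _ hne
        simp [Pi.single_apply, hne]
    · rw [if_neg hj, Finset.sum_eq_zero]
      intro i hi
      have hne : i ≠ j := fun h => hj (h ▸ hi)
      simp [Pi.single_apply, hne]
  set Ip : Finset (Fin d) := Finset.univ.filter (fun i => 0 < c i) with hIp
  set Im : Finset (Fin d) := Finset.univ.filter (fun i => c i < 0) with hIm
  have hdisj : Disjoint Ip Im := by
    rw [Finset.disjoint_filter]
    intro i _ h1 h2
    exact absurd h1 (not_lt.mpr h2.le)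
  set α : Fin d → ℝ := fun i => |c i| with hα
  have hαpos : ∀ i ∈ Ip ∪ Im, 0 < α i := by
    intro i hi
    rcases Finset.mem_union.mp hi with h | h
    · exact abs_pos.mpr (ne_of_gt (Finset.mem_filter.mp h).2)
    · exact abs_pos.mpr (ne_of_lt (Finset.mem_filter.mp h).2)
  have hsumdecomp : (∑ i, c i • astar i)
      = ∑ i ∈ Ip, α i • astar i - ∑ i ∈ Im, α i • astar i := by
    rw [hIp, hIm, Finset.sum_filter, Finset.sum_filter, ← Finset.sum_sub_distrib]
    refine Finset.sum_congr rfl fun i _ => ?_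
    rcases lt_trichotomy (c i) 0 with h | h | h
    · rw [if_neg (not_lt.mpr h.le), if_pos h, show α i = -(c i) by simp [hα, abs_of_neg h],
        neg_smul]
      abel
    · rw [if_neg (by rw [h]; exact lt_irrefl 0), if_neg (by rw [h]; exact lt_irrefl 0), h]
      simp
    · rw [if_pos h, if_neg (not_lt.mpr h.le), show α i = c i by simp [hα, abs_of_pos h],
        sub_zero]
  have hAx : A.mulVec (x₀ + ∑ i, c i • astar i) = A.mulVec x := by
    rw [Matrix.mulVec_add, hx0, hAsumgen]
    funext j
    simp only [Pi.add_apply, Pi.neg_apply, hsingleval, Finset.mem_univ, if_pos, hc,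
      Pi.add_apply]
    ring
  have hxdecomp : x = x₀ + ∑ i ∈ Ip, α i • astar i - ∑ i ∈ Im, α i • astar i := by
    have hinj : Function.Injective A.mulVec :=
      Matrix.mulVec_injective_iff_isUnit.mpr ((Matrix.isUnit_iff_isUnit_det A).mpr hA)
    have h := hinj hAx
    rw [← h, hsumdecomp]
    abel
  have hp : proj x = x₀ + ∑ i ∈ Ip, α i • astar i := by
    rw [hxdecomp]
    exact hproj Ip Im hdisj α hαpos
  rw [hp, Matrix.mulVec_add, hx0, hAsumgen]
  funext j
  simp only [relu, Pi.add_apply, Pi.neg_apply, hsingleval]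
  by_cases hj : 0 < c j
  · rw [if_pos (Finset.mem_filter.mpr ⟨Finset.mem_univ j, hj⟩),
      show α j = c j by simp [hα, abs_of_pos hj], max_eq_left hj.le]
    ring
  · have hnj : j ∉ Ip := fun h => hj (Finset.mem_filter.mp h).2
    rw [if_neg hnj, max_eq_right (not_lt.mp hj)]
    ring
end

section
/- Let T(x) = ReLU(Ax + b) with A invertible. The preimage under T of a point y ∈ Ŝ_{(I_+,∅)} = { Σ_{i∈I_+} β_i e_i : β_i > 0 } is exactly the set { A^{-1}(y − b) − Σ_{i∈I\I_+} α_i a*_i : α_i ≥ 0 }. -/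
open Matrix Finset

theorem stmt9 {d : ℕ} (A : Matrix (Fin d) (Fin d) ℝ) (hA : IsUnit A.det)
    (b : Fin d → ℝ)
    (astar : Fin d → Fin d → ℝ)
    (hdual : ∀ i j, A j ⬝ᵥ astar i = if i = j then 1 else 0)
    (Ip : Finset (Fin d)) (y : Fin d → ℝ) (hy : y ∈ canonicalSector Ip) :
    { x | relu (A.mulVec x + b) = y }
      = { x | ∃ α : Fin d → ℝ, (∀ i, 0 ≤ α i) ∧
          x = A⁻¹.mulVec (y - b) - ∑ i ∈ Ipᶜ, α i • astar i } := by
  obtain ⟨β, hβ, hyeq⟩ := hy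
  set x₀ : Fin d → ℝ := A⁻¹.mulVec (y - b) with hx₀def
  have hyval : ∀ j, y j = if j ∈ Ip then β j else 0 := by
    intro j
    rw [hyeq]
    simp only [Finset.sum_apply, Pi.smul_apply, Pi.single_apply, smul_eq_mul,
      mul_ite, mul_one, mul_zero]
    rw [Finset.sum_ite_eq Ip j β]
  have hAx₀ : A.mulVec x₀ = y - b := by
    rw [hx₀def, Matrix.mulVec_mulVec, Matrix.mul_nonsing_inv A hA, Matrix.one_mulVec]
  have key : ∀ (α : Fin d → ℝ) (j : Fin d),
      A.mulVec (x₀ - ∑ i ∈ Ipᶜ, α i • astar i) j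
        = y j - b j - (if j ∈ Ipᶜ then α j else 0) := by
    intro α j
    have h1 : A.mulVec (x₀ - ∑ i ∈ Ipᶜ, α i • astar i) j
        = A.mulVec x₀ j - A.mulVec (∑ i ∈ Ipᶜ, α i • astar i) j := by
      rw [Matrix.mulVec_sub]; rfl
    rw [h1, hAx₀]
    have h2 : A.mulVec (∑ i ∈ Ipᶜ, α i • astar i) j
        = ∑ i ∈ Ipᶜ, α i * (A j ⬝ᵥ astar i) := by
      show A j ⬝ᵥ (∑ i ∈ Ipᶜ, α i • astar i) = _
      simp only [dotProduct, Finset.sum_apply, Pi.smul_apply, smul_eq_mul,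
        Finset.mul_sum]
      rw [Finset.sum_comm]
      refine Finset.sum_congr rfl fun i _ => ?_
      refine Finset.sum_congr rfl fun k _ => ?_
      ring
    rw [h2]
    simp only [hdual, mul_ite, mul_one, mul_zero]
    rw [Finset.sum_ite_eq' Ipᶜ j α]
    simp [Pi.sub_apply]
  have hAinj : Function.Injective (A.mulVec) := by
    intro u v huv
    have : A⁻¹.mulVec (A.mulVec u) = A⁻¹.mulVec (A.mulVec v) := by rw [huv]
    rwa [Matrix.mulVec_mulVec, Matrix.mulVec_mulVec, Matrix.nonsing_inv_mul A hA,
      Matrix.one_mulVec, Matrix.one_mulVec] at this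
  ext x
  simp only [Set.mem_setOf_eq]
  constructor
  · intro hrelu
    set c : Fin d → ℝ := A.mulVec x + b with hc
    have hcj : ∀ j, max (c j) 0 = y j := fun j => congrFun hrelu j
    refine ⟨fun j => y j - c j + b j - b j + (b j - b j), ?_, ?_⟩
    · intro j
      have := hcj j
      by_cases hj : j ∈ Ip
      · have hpos : 0 < y j := by rw [hyval j, if_pos hj]; exact hβ j hj
        have : c j = y j := by
          rcases max_cases (c j) 0 with ⟨h1, h2⟩ | ⟨h1, h2⟩
          · rw [← (hcj j), h1]
          · exfalso; rw [(hcj j).symm, h1] at hpos; exact lt_irrefl 0 hpos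
        simp [this]
      · have hy0 : y j = 0 := by rw [hyval j, if_neg hj]
        have hc0 : c j ≤ 0 := by
          by_contra h
          push_neg at h
          have := hcj j
          rw [max_eq_left h.le, hy0] at this
          exact absurd this (ne_of_gt h)
        simp [hy0]; linarith
    · apply hAinj
      funext j
      rw [key]
      have hcb : (A.mulVec x) j = c j - b j := by simp [hc]
      rw [hcb]
      by_cases hj : j ∈ Ip
      · have hpos : 0 < y j := by rw [hyval j, if_pos hj]; exact hβ j hj
        have hcy : c j = y j := by
          rcases max_cases (c j) 0 with ⟨h1, h2⟩ | ⟨h1, h2⟩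
          · rw [← (hcj j), h1]
          · exfalso; rw [(hcj j).symm, h1] at hpos; exact lt_irrefl 0 hpos
        rw [if_neg (by simpa using hj)]
        simp [hcy]
      · rw [if_pos (Finset.mem_compl.mpr hj)]
        ring
  · rintro ⟨α, hα, rfl⟩
    funext j
    show max (A.mulVec (x₀ - ∑ i ∈ Ipᶜ, α i • astar i) j + b j) 0 = y j
    rw [key]
    by_cases hj : j ∈ Ip
    · rw [if_neg (by simpa using hj)]
      have hpos : 0 < y j := by rw [hyval j, if_pos hj]; exact hβ j hj
      have : y j - b j - 0 + b j = y j := by ring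
      rw [this, max_eq_left hpos.le]
    · rw [if_pos (Finset.mem_compl.mpr hj)]
      have hy0 : y j = 0 := by rw [hyval j, if_neg hj]
      rw [hy0]
      have : (0:ℝ) - b j - α j + b j = -α j := by ring
      rw [this]
      exact max_eq_right (by linarith [hα j])
end

section
/- Let T(x) = ReLU(Ax + b) with A invertible. For any y ∈ Ŝ_{(I_+,∅)}, the preimage T^{-1}({y}) is contained in an affine subspace of dimension d − |I_+|, namely A^{-1}(y−b) + span{a*_i : i ∈ I\I_+}, and its affine span has exactly this dimension. -/
open Matrix Finset

theorem stmt10 {d : ℕ} (A : Matrix (Fin d) (Fin d) ℝ) (hA : IsUnit A.det)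
    (b : Fin d → ℝ)
    (astar : Fin d → Fin d → ℝ)
    (hdual : ∀ i j, A j ⬝ᵥ astar i = if i = j then 1 else 0)
    (Ip : Finset (Fin d)) (y : Fin d → ℝ) (hy : y ∈ canonicalSector Ip) :
    ({ x | relu (A.mulVec x + b) = y } ⊆
      { x | ∃ c ∈ Submodule.span ℝ (astar '' (↑(Ipᶜ) : Set (Fin d))),
          x = A⁻¹.mulVec (y - b) + c }) ∧
    Module.finrank ℝ
        (affineSpan ℝ { x | relu (A.mulVec x + b) = y }).direction = d - Ip.card := by
  obtain ⟨β, hβ, rfl⟩ := hy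
  set y : Fin d → ℝ := ∑ i ∈ Ip, β i • (Pi.single i (1:ℝ) : Fin d → ℝ) with hy_def
  have hyval : ∀ j, y j = if j ∈ Ip then β j else 0 := by
    intro j
    rw [hy_def]
    simp only [Finset.sum_apply, Pi.smul_apply, Pi.single_apply, smul_eq_mul]
    by_cases hj : j ∈ Ip
    · simp [hj, Finset.sum_ite_eq' Ip j, mul_comm]
    · simp [hj]
  have hynn : ∀ j, 0 ≤ y j := by
    intro j; rw [hyval]; split
    · exact le_of_lt (hβ _ ‹_›)
    · exact le_refl 0
  -- astar is the columns of A⁻¹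
  have hAu : IsUnit A := (Matrix.isUnit_iff_isUnit_det A).2 hA
  have hAstar : ∀ i, A.mulVec (astar i) = Pi.single i (1:ℝ) := by
    intro i; funext j
    rw [Matrix.mulVec, hdual i j, Pi.single_apply]
    simp [eq_comm]
  have hAA : ∀ v, A.mulVec (A⁻¹.mulVec v) = v := by
    intro v; rw [Matrix.mulVec_mulVec, Matrix.mul_nonsing_inv A hA, Matrix.one_mulVec]
  have hAA' : ∀ v, A⁻¹.mulVec (A.mulVec v) = v := by
    intro v; rw [Matrix.mulVec_mulVec, Matrix.nonsing_inv_mul A hA, Matrix.one_mulVec]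
  have hastar : ∀ i, astar i = A⁻¹.mulVec (Pi.single i (1:ℝ)) := by
    intro i; rw [← hAstar i, hAA']
  have hsum : ∀ v : Fin d → ℝ, A⁻¹.mulVec v = ∑ i, v i • astar i := by
    intro v
    have : v = ∑ i, v i • (Pi.single i (1:ℝ) : Fin d → ℝ) := by
      funext j
      simp [Finset.sum_apply, Pi.single_apply, Finset.sum_ite_eq' Finset.univ j, mul_comm]
    conv_lhs => rw [this]
    rw [show (A⁻¹.mulVec : (Fin d → ℝ) → (Fin d → ℝ)) = A⁻¹.mulVecLin from rfl]
    rw [map_sum]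
    refine Finset.sum_congr rfl fun i _ => ?_
    rw [_root_.map_smul, hastar]
    rfl
  set x₀ : Fin d → ℝ := A⁻¹.mulVec (y - b) with hx₀
  set S : Set (Fin d → ℝ) := { x | relu (A.mulVec x + b) = y } with hS
  -- characterization of membership
  have hchar : ∀ x, x ∈ S ↔
      ((∀ i ∈ Ip, (A.mulVec x + b) i = y i) ∧ (∀ i ∉ Ip, (A.mulVec x + b) i ≤ 0)) := by
    intro x
    constructor
    · intro hx
      have hx' : ∀ i, max ((A.mulVec x + b) i) 0 = y i := fun i => congrFun hx i
      constructor
      · intro i hi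
        have := hx' i
        rcases max_cases ((A.mulVec x + b) i) 0 with ⟨h1, h2⟩ | ⟨h1, h2⟩
        · rw [h1] at this; exact this
        · rw [h1] at this
          exfalso
          rw [hyval i] at this
          simp [hi] at this
          linarith [hβ i hi]
      · intro i hi
        have := hx' i
        have hyi : y i = 0 := by rw [hyval]; simp [hi]
        rw [hyi] at this
        exact max_eq_right_iff.1 this
    · rintro ⟨h1, h2⟩
      funext i
      show max ((A.mulVec x + b) i) 0 = y i
      by_cases hi : i ∈ Ip
      · rw [h1 i hi]; exact max_eq_left (hynn i)
      · have hyi : y i = 0 := by rw [hyval]; simp [hi]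
        rw [hyi]; exact max_eq_right (h2 i hi)
  -- the subset statement
  have hsub : ∀ x ∈ S, x - x₀ ∈ Submodule.span ℝ (astar '' (↑(Ipᶜ) : Set (Fin d))) := by
    intro x hx
    obtain ⟨h1, h2⟩ := (hchar x).1 hx
    have hxeq : x - x₀ = A⁻¹.mulVec ((A.mulVec x + b) - y) := by
      rw [hx₀, Matrix.mulVec_sub, Matrix.mulVec_sub, Matrix.mulVec_add, hAA']
      abel
    rw [hxeq, hsum]
    rw [← Finset.sum_compl_add_sum Ip]
    have hzero : ∑ i ∈ Ip, ((A.mulVec x + b) - y) i • astar i = 0 := by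
      refine Finset.sum_eq_zero fun i hi => ?_
      have : ((A.mulVec x + b) - y) i = 0 := by
        simp [h1 i hi]
      rw [this, zero_smul]
    rw [hzero, add_zero]
    refine Submodule.sum_mem _ fun i hi => ?_
    exact Submodule.smul_mem _ _ (Submodule.subset_span ⟨i, by simpa using hi, rfl⟩)
  have part1 : S ⊆ { x | ∃ c ∈ Submodule.span ℝ (astar '' (↑(Ipᶜ) : Set (Fin d))),
      x = A⁻¹.mulVec (y - b) + c } := by
    intro x hx
    refine ⟨x - x₀, hsub x hx, ?_⟩
    show x = x₀ + (x - x₀)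
    abel
  refine ⟨part1, ?_⟩
  -- key points in S
  have hx0S : x₀ ∈ S := by
    rw [hchar]
    have : A.mulVec x₀ + b = y := by rw [hx₀, hAA]; abel
    rw [this]
    exact ⟨fun i _ => rfl, fun i hi => by rw [hyval]; simp [hi]⟩
  have hxiS : ∀ i ∉ Ip, x₀ - astar i ∈ S := by
    intro i hi
    rw [hchar]
    have hv : A.mulVec (x₀ - astar i) + b = y - Pi.single i (1:ℝ) := by
      rw [Matrix.mulVec_sub, hAstar, hx₀, hAA]
      abel
    rw [hv]
    constructor
    · intro j hj
      have hji : j ≠ i := fun h => hi (h ▸ hj)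
      simp [Pi.single_apply, hji.symm]
    · intro j hj
      by_cases hji : j = i
      · subst hji
        have : y j = 0 := by rw [hyval]; simp [hj]
        simp [this, Pi.single_apply]
      · have : (Pi.single i (1:ℝ) : Fin d → ℝ) j = 0 := by
          simp [Pi.single_apply, Ne.symm hji]
        have hyj : y j = 0 := by rw [hyval]; simp [hj]
        simp [this, hyj]
  -- vectorSpan = span
  have hvs : vectorSpan ℝ S = Submodule.span ℝ (astar '' (↑(Ipᶜ) : Set (Fin d))) := by
    apply le_antisymm
    · rw [vectorSpan_def]
      refine Submodule.span_le.2 ?_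
      rintro v ⟨x, hx, x', hx', rfl⟩
      have h1 := hsub x hx
      have h2 := hsub x' hx'
      show x - x' ∈ (Submodule.span ℝ (astar '' (↑(Ipᶜ) : Set (Fin d))) : Set (Fin d → ℝ))
      have : x - x' = (x - x₀) - (x' - x₀) := by abel
      rw [this]
      exact Submodule.sub_mem _ h1 h2
    · refine Submodule.span_le.2 ?_
      rintro v ⟨i, hi, rfl⟩
      have hi' : i ∉ Ip := by simpa using hi
      have := vsub_mem_vectorSpan ℝ hx0S (hxiS i hi')
      have heq : x₀ -ᵥ (x₀ - astar i) = astar i := by simp [vsub_eq_sub]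
      rwa [heq] at this
  rw [direction_affineSpan, hvs]
  -- finrank computation
  have hinj : Function.Injective (A⁻¹).mulVecLin := by
    rw [Matrix.coe_mulVecLin]
    exact Matrix.mulVec_injective_iff_isUnit.2 (Matrix.isUnit_nonsing_inv_iff.2 hAu)
  have li : LinearIndependent ℝ astar := by
    have hb : LinearIndependent ℝ (fun i => (Pi.single i (1:ℝ) : Fin d → ℝ)) := by
      have h := (Pi.basisFun ℝ (Fin d)).linearIndependent
      have he : ⇑(Pi.basisFun ℝ (Fin d)) = fun i => (Pi.single i (1:ℝ) : Fin d → ℝ) :=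
        funext fun i => by simp
      rwa [he] at h
    have := hb.map' (A⁻¹).mulVecLin (LinearMap.ker_eq_bot.2 hinj)
    convert this using 1
    funext i
    rw [hastar]
    rfl
    all_goals rfl
  have himg : astar '' (↑(Ipᶜ) : Set (Fin d)) =
      Set.range (fun i : (↑(Ipᶜ) : Set (Fin d)) => astar i) := Set.image_eq_range _ _
  rw [himg]
  have li' : LinearIndependent ℝ (fun i : (↑(Ipᶜ) : Set (Fin d)) => astar i) :=
    li.comp _ Subtype.val_injective
  rw [finrank_span_eq_card li', ← Set.toFinset_card, Finset.toFinset_coe,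
    Finset.card_compl, Fintype.card_fin]
end

section
/- Let T(x) = ReLU(Ax + b) with A invertible. For J ⊆ I = {1,...,d}, the preimage of the canonical sector Ŝ_{(J,∅)} under T is the union over all K ⊆ I\J of the sectors S_{(J,K)}: T^{-1}(Ŝ_{(J,∅)}) = ⋃_{K ⊆ I\J} S_{(J,K)}. -/
open Matrix Finset

lemma sum_smul_single_apply {d : ℕ} (S : Finset (Fin d)) (α : Fin d → ℝ) (j : Fin d) :
    (∑ i ∈ S, α i • (Pi.single i (1 : ℝ) : Fin d → ℝ)) j =
      if j ∈ S then α j else 0 := by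
  simp [Finset.sum_apply, Pi.single_apply]

lemma mem_sector_single_iff {d : ℕ} {J K : Finset (Fin d)} (hJK : Disjoint J K)
    (y : Fin d → ℝ) :
    y ∈ sector 0 (fun i => Pi.single i 1) J K ↔
      (∀ i ∈ J, 0 < y i) ∧ (∀ i ∈ K, y i < 0) ∧ ∀ i ∉ J ∪ K, y i = 0 := by
  have hK_of_J : ∀ i ∈ J, i ∉ K := fun _ hi => disjoint_left.mp hJK hi
  constructor
  · rintro ⟨α, hα, rfl⟩
    simp only [Pi.sub_apply, zero_add, sum_smul_single_apply]
    refine ⟨fun i hi => ?_, fun i hi => ?_, fun i hi => ?_⟩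
    · simpa [hi, hK_of_J i hi] using hα i (mem_union_left _ hi)
    · have hiJ : i ∉ J := fun h => hK_of_J i h hi
      simpa [hi, hiJ] using hα i (mem_union_right _ hi)
    · simp only [mem_union, not_or] at hi
      simp [hi.1, hi.2]
  · rintro ⟨hJ, hK, hzero⟩
    refine ⟨fun i => |y i|, fun i hi => ?_, funext fun j => ?_⟩
    · rcases mem_union.mp hi with hi | hi
      exacts [abs_pos.mpr (hJ i hi).ne', abs_pos.mpr (hK i hi).ne]
    · simp only [Pi.sub_apply, zero_add, sum_smul_single_apply]
      by_cases hj : j ∈ J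
      · simp [hj, hK_of_J j hj, abs_of_pos (hJ j hj)]
      by_cases hk : j ∈ K
      · simp [hj, hk, abs_of_neg (hK j hk)]
      · simp [hj, hk, hzero j (by simp [hj, hk])]

lemma canonicalSector_eq_sector {d : ℕ} (J : Finset (Fin d)) :
    canonicalSector J = sector 0 (fun i => Pi.single i 1) J ∅ := by
  ext y
  simp [canonicalSector, sector]

lemma mem_canonicalSector_iff {d : ℕ} (J : Finset (Fin d)) (y : Fin d → ℝ) :
    y ∈ canonicalSector J ↔ (∀ i ∈ J, 0 < y i) ∧ ∀ i ∉ J, y i = 0 := by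
  simp [canonicalSector_eq_sector, mem_sector_single_iff (disjoint_empty_right J)]

lemma relu_mem_canonicalSector_iff {d : ℕ} (J : Finset (Fin d)) (y : Fin d → ℝ) :
    relu y ∈ canonicalSector J ↔
      ∃ K ⊆ Jᶜ, y ∈ sector 0 (fun i => Pi.single i 1) J K := by
  have hdisj : ∀ {K : Finset (Fin d)}, K ⊆ Jᶜ → Disjoint J K := fun hK =>
    disjoint_left.mpr fun i hiJ hiK => mem_compl.mp (hK hiK) hiJ
  simp only [mem_canonicalSector_iff, relu, lt_max_iff, lt_irrefl, or_false, max_eq_right_iff]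
  constructor
  · rintro ⟨hJ, hnotJ⟩
    refine ⟨Jᶜ.filter (fun i => y i < 0), filter_subset _ _, ?_⟩
    rw [mem_sector_single_iff (hdisj (filter_subset _ _))]
    refine ⟨hJ, fun i hi => (mem_filter.mp hi).2, fun i hi => ?_⟩
    simp only [mem_union, mem_filter, mem_compl, not_or, not_and, not_lt] at hi
    exact le_antisymm (hnotJ i hi.1) (hi.2 hi.1)
  · rintro ⟨K, hKJ, hy⟩
    obtain ⟨hJ, hK, hzero⟩ := (mem_sector_single_iff (hdisj hKJ) y).mp hy
    refine ⟨hJ, fun i hiJ => ?_⟩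
    by_cases hiK : i ∈ K
    · exact (hK i hiK).le
    · exact (hzero i (by simp [hiJ, hiK])).le

lemma sector_eq_preimage {d : ℕ} (A : Matrix (Fin d) (Fin d) ℝ)
    (hinj : Function.Injective A.mulVec) (b x₀ : Fin d → ℝ) (hx₀ : A *ᵥ x₀ + b = 0)
    (astar : Fin d → Fin d → ℝ) (hastar : ∀ i, A *ᵥ astar i = Pi.single i 1)
    (J K : Finset (Fin d)) :
    sector x₀ astar J K =
      (fun x => A *ᵥ x + b) ⁻¹' sector 0 (fun i => Pi.single i 1) J K := by
  have hmap : ∀ α : Fin d → ℝ,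
      A *ᵥ (x₀ + ∑ i ∈ J, α i • astar i - ∑ i ∈ K, α i • astar i) + b
        = 0 + ∑ i ∈ J, α i • Pi.single i 1 - ∑ i ∈ K, α i • Pi.single i 1 := by
    intro α
    have hsum : ∀ S : Finset (Fin d),
        A *ᵥ ∑ i ∈ S, α i • astar i = ∑ i ∈ S, α i • Pi.single i 1 := fun S => by
      simp only [mulVec_sum, mulVec_smul, hastar]
    rw [mulVec_sub, mulVec_add, hsum, hsum, ← hx₀]
    abel
  ext x
  constructor
  · rintro ⟨α, hα, rfl⟩
    exact ⟨α, hα, hmap α⟩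
  · rintro ⟨α, hα, hx⟩
    refine ⟨α, hα, hinj (add_right_cancel (b := b) ?_)⟩
    rw [hmap α]
    exact hx

theorem stmt11 {d : ℕ} (A : Matrix (Fin d) (Fin d) ℝ) (hA : IsUnit A.det)
    (b : Fin d → ℝ) (x₀ : Fin d → ℝ) (hx₀ : x₀ = -(A⁻¹.mulVec b))
    (astar : Fin d → Fin d → ℝ)
    (hdual : ∀ i j, A j ⬝ᵥ astar i = if i = j then 1 else 0)
    (J : Finset (Fin d)) :
    (fun x => relu (A.mulVec x + b)) ⁻¹' canonicalSector J
      = ⋃ (K : Finset (Fin d)) (_ : K ⊆ Jᶜ), sector x₀ astar J K := by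
  have hinj : Function.Injective A.mulVec :=
    mulVec_injective_iff_isUnit.mpr ((isUnit_iff_isUnit_det A).mpr hA)
  have hx₀' : A *ᵥ x₀ + b = 0 := by
    simp [hx₀, mulVec_neg, mulVec_mulVec, mul_nonsing_inv A hA]
  have hastar : ∀ i, A *ᵥ astar i = Pi.single i 1 := fun i => funext fun j => by
    simp [mulVec, hdual, Pi.single_apply, eq_comm]
  ext x
  simp only [Set.mem_preimage, Set.mem_iUnion, exists_prop,
    sector_eq_preimage A hinj b x₀ hx₀' astar hastar, relu_mem_canonicalSector_iff]
end

section
/- Let T(x) = ReLU(Ax + b) with A invertible. For J ⊆ I, the preimage of the closed canonical sector, the closure of Ŝ_{(J,∅)}, equals ⋃_{K ⊆ J} closure(S_{(K, I\K)}), where closure(S_{(K,L)}) = { x_0 + Σ_{k∈K} α_k a*_k − Σ_{l∈L} α_l a*_l : α ≥ 0 }. -/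
open Matrix Finset

lemma mulVec_sum_astar' {d : ℕ} (A : Matrix (Fin d) (Fin d) ℝ)
    (astar : Fin d → Fin d → ℝ)
    (hdual : ∀ i j, A j ⬝ᵥ astar i = if i = j then 1 else 0)
    (c : Fin d → ℝ) :
    A.mulVec (∑ j, c j • astar j) = c := by
  funext k
  simp only [Matrix.mulVec, dotProduct, Finset.sum_apply, Pi.smul_apply,
    smul_eq_mul, Finset.mul_sum]
  rw [Finset.sum_comm]
  have h : ∀ j : Fin d, ∑ i, A k i * (c j * astar j i) = c j * (A k ⬝ᵥ astar j) := by
    intro j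
    rw [dotProduct, Finset.mul_sum]
    exact Finset.sum_congr rfl fun i _ => by ring
  simp_rw [h, hdual]
  simp

theorem stmt12 {d : ℕ} (A : Matrix (Fin d) (Fin d) ℝ) (hA : IsUnit A.det)
    (b : Fin d → ℝ) (x₀ : Fin d → ℝ) (hx₀ : x₀ = -(A⁻¹.mulVec b))
    (astar : Fin d → Fin d → ℝ)
    (hdual : ∀ i j, A j ⬝ᵥ astar i = if i = j then 1 else 0)
    (J : Finset (Fin d)) :
    (fun x => relu (A.mulVec x + b)) ⁻¹'
        { y | ∃ β : Fin d → ℝ, (∀ i ∈ J, 0 ≤ β i) ∧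
            y = ∑ i ∈ J, β i • (Pi.single i (1:ℝ) : Fin d → ℝ) }
      = ⋃ (K : Finset (Fin d)) (_ : K ⊆ J),
          { x | ∃ α : Fin d → ℝ, (∀ i, 0 ≤ α i) ∧
              x = x₀ + ∑ i ∈ K, α i • astar i - ∑ i ∈ Kᶜ, α i • astar i } := by
  have hAx₀ : A.mulVec x₀ = -b := by
    rw [hx₀]
    rw [Matrix.mulVec_neg, Matrix.mulVec_mulVec, Matrix.mul_nonsing_inv A hA,
      Matrix.one_mulVec]
  -- key: A.mulVec (x₀ + ∑ j, c j • astar j) + b = c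
  have key : ∀ c : Fin d → ℝ, A.mulVec (x₀ + ∑ j, c j • astar j) + b = c := by
    intro c
    rw [Matrix.mulVec_add, hAx₀, mulVec_sum_astar' A astar hdual]
    funext k; simp
  ext x
  simp only [Set.mem_preimage, Set.mem_setOf_eq, Set.mem_iUnion]
  constructor
  · rintro ⟨β, hβ, hrel⟩
    set y := A.mulVec x + b with hy
    -- facts about y
    have hyj : ∀ j, max (y j) 0 = if j ∈ J then β j else 0 := by
      intro j
      have := congrFun hrel j
      simp only [relu] at this
      rw [this, Finset.sum_apply]
      simp_rw [Pi.smul_apply, Pi.single_apply, smul_eq_mul, mul_ite, mul_one, mul_zero]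
      rw [Finset.sum_ite_eq J j β]
    have hxy : x = x₀ + ∑ j, y j • astar j := by
      have h2 := key y
      have : A.mulVec x = A.mulVec (x₀ + ∑ j, y j • astar j) := by
        have := congrArg (fun v => v - b) h2
        simp only [add_sub_cancel_right] at this
        rw [this]; simp [hy]
      have := congrArg A⁻¹.mulVec this
      rwa [Matrix.mulVec_mulVec, Matrix.mulVec_mulVec, Matrix.nonsing_inv_mul A hA,
        Matrix.one_mulVec, Matrix.one_mulVec] at this
    refine ⟨J.filter (fun j => 0 ≤ y j), Finset.filter_subset _ _, fun j => |y j|, fun i => abs_nonneg _, ?_⟩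
    have habs : ∀ j, (if j ∈ J.filter (fun j => 0 ≤ y j) then |y j| else -|y j|) = y j := by
      intro j
      by_cases hj : j ∈ J.filter (fun j => 0 ≤ y j)
      · simp only [hj, if_true]
        exact abs_of_nonneg (Finset.mem_filter.mp hj).2
      · simp only [hj, if_false]
        have hle : y j ≤ 0 := by
          by_cases hJ : j ∈ J
          · by_contra hc
            push_neg at hc
            exact hj (Finset.mem_filter.mpr ⟨hJ, le_of_lt hc⟩)
          · have := hyj j
            simp only [hJ, if_false] at this
            exact le_of_max_le_left this.le
        rw [abs_of_nonpos hle]; ring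
    have e1 : ∑ j ∈ J.filter (fun j => 0 ≤ y j), y j • astar j
        = ∑ j ∈ J.filter (fun j => 0 ≤ y j), |y j| • astar j :=
      Finset.sum_congr rfl fun j hj => by rw [← habs j]; simp [hj]
    have e2 : ∑ j ∈ (J.filter (fun j => 0 ≤ y j))ᶜ, y j • astar j
        = -∑ j ∈ (J.filter (fun j => 0 ≤ y j))ᶜ, |y j| • astar j := by
      rw [← Finset.sum_neg_distrib]
      exact Finset.sum_congr rfl fun j hj => by
        rw [← habs j, ← neg_smul]; simp [Finset.mem_compl.mp hj]
    rw [hxy, ← Finset.sum_compl_add_sum (J.filter (fun j => 0 ≤ y j))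
      (fun j => y j • astar j), e1, e2]
    abel
  · rintro ⟨K, hKJ, α, hα, hx⟩
    set c : Fin d → ℝ := fun j => if j ∈ K then α j else -α j with hc
    have hsplit : (∑ i ∈ K, α i • astar i) - ∑ i ∈ Kᶜ, α i • astar i
        = ∑ j, c j • astar j := by
      rw [← Finset.sum_compl_add_sum K (fun j => c j • astar j)]
      have h1 : ∑ j ∈ Kᶜ, c j • astar j = -∑ i ∈ Kᶜ, α i • astar i := by
        rw [← Finset.sum_neg_distrib]
        refine Finset.sum_congr rfl fun j hj => ?_
        have : j ∉ K := Finset.mem_compl.mp hj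
        simp [hc, this]
      have h2 : ∑ j ∈ K, c j • astar j = ∑ i ∈ K, α i • astar i :=
        Finset.sum_congr rfl fun j hj => by simp [hc, hj]
      rw [h1, h2]; ring
    have hy : A.mulVec x + b = c := by
      rw [hx, add_sub_assoc, hsplit]; exact key c
    refine ⟨fun j => if j ∈ K then α j else 0, fun i _ => by dsimp only; split_ifs with h; exacts [hα i, le_rfl], ?_⟩
    funext j
    simp only [relu, hy]
    rw [Finset.sum_apply]
    simp_rw [Pi.smul_apply, Pi.single_apply, smul_eq_mul, mul_ite, mul_one, mul_zero]
    rw [Finset.sum_ite_eq J j]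
    by_cases hj : j ∈ K
    · have hjJ : j ∈ J := hKJ hj
      simp [hc, hj, hjJ, hα j]
    · have : c j = -α j := by simp [hc, hj]
      rw [this]
      have : max (-α j) 0 = 0 := max_eq_right (neg_nonpos.mpr (hα j))
      rw [this]
      by_cases hjJ : j ∈ J <;> simp [hjJ, hj]
end

section
/- Consider the shallow network F = L ∘ T with T(x) = ReLU(Ax+b), A invertible, and L(y) = âᴸ·y + b̂ᴸ with b̂ᴸ < 0 and all âᴸ_i ≠ 0, and let t_i = -b̂ᴸ/âᴸ_i. For J ⊆ I = {1,...,d}, the preimage T^{-1}(ker(L) ∩ Ŝ_{(J,∅)}) is nonempty if and only if there exists j ∈ J with t_j > 0 (equivalently, J is not contained in {i : t_i < 0}). -/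
open Matrix Finset

lemma y_apply {d : ℕ} (J : Finset (Fin d)) (β : Fin d → ℝ) (k : Fin d) :
    (∑ i ∈ J, β i • (Pi.single i (1:ℝ) : Fin d → ℝ)) k
      = if k ∈ J then β k else 0 := by
  simp [Finset.sum_apply, Pi.single_apply, Finset.sum_ite_eq]

lemma dot_y {d : ℕ} (J : Finset (Fin d)) (β aL : Fin d → ℝ) :
    aL ⬝ᵥ (∑ i ∈ J, β i • (Pi.single i (1:ℝ) : Fin d → ℝ))
      = ∑ i ∈ J, aL i * β i := by
  simp only [dotProduct, y_apply, mul_ite, mul_zero]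
  rw [Finset.sum_ite_mem, Finset.univ_inter]

theorem stmt17 {d : ℕ} (A : Matrix (Fin d) (Fin d) ℝ) (hA : IsUnit A.det)
    (b : Fin d → ℝ) (aL : Fin d → ℝ) (bL : ℝ) (hbL : bL < 0)
    (haL : ∀ i, aL i ≠ 0) (t : Fin d → ℝ) (ht : ∀ i, t i = -bL / aL i)
    (J : Finset (Fin d)) :
    ((fun x => relu (A.mulVec x + b)) ⁻¹'
        ({ y | aL ⬝ᵥ y + bL = 0 } ∩ canonicalSector J)).Nonempty
      ↔ ∃ j ∈ J, 0 < t j := by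
  constructor
  · rintro ⟨x, hker, β, hβpos, hy⟩
    simp only [Set.mem_setOf_eq, hy, dot_y] at hker
    by_contra hcon
    push_neg at hcon
    have hsum : ∑ i ∈ J, aL i * β i = -bL := by linarith
    have hneg : ∀ i ∈ J, aL i * β i ≤ 0 := by
      intro i hi
      have hti := hcon i hi
      rw [ht i] at hti
      have hai : aL i < 0 := by
        rcases lt_or_gt_of_ne (haL i) with h | h
        · exact h
        · exfalso
          have : 0 < -bL / aL i := div_pos (by linarith) h
          linarith
      exact mul_nonpos_of_nonpos_of_nonneg hai.le (hβpos i hi).le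
    have : ∑ i ∈ J, aL i * β i ≤ 0 := Finset.sum_nonpos hneg
    linarith
  · rintro ⟨j, hj, htj⟩
    have haj : 0 < aL j := by
      rcases lt_or_gt_of_ne (haL j) with h | h
      · exfalso
        rw [ht j] at htj
        have : -bL / aL j < 0 := div_neg_of_pos_of_neg (by linarith) h
        linarith
      · exact h
    set S : ℝ := ∑ i ∈ J.erase j, aL i with hS
    set ε : ℝ := (-bL) / (2 * (|S| + 1)) with hε
    have habs : (0:ℝ) < |S| + 1 := by positivity
    have hεpos : 0 < ε := by
      apply div_pos (by linarith)
      positivity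
    have hεS : ε * S < -bL := by
      calc ε * S ≤ ε * |S| := by
            exact mul_le_mul_of_nonneg_left (le_abs_self S) hεpos.le
        _ < ε * (|S| + 1) := by nlinarith
        _ = -bL / 2 := by
            rw [hε]; field_simp
        _ < -bL := by linarith
    set c : ℝ := (-bL - ε * S) / aL j with hc
    have hcpos : 0 < c := div_pos (by linarith) haj
    set β : Fin d → ℝ := fun i => if i = j then c else ε with hβ
    have hβpos : ∀ i ∈ J, 0 < β i := by
      intro i _
      by_cases h : i = j <;> simp [hβ, h, hcpos, hεpos]
    set y : Fin d → ℝ := ∑ i ∈ J, β i • (Pi.single i (1:ℝ) : Fin d → ℝ) with hyd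
    set z : Fin d → ℝ := fun k => if k ∈ J then β k else (-1) with hz
    refine ⟨A⁻¹.mulVec (z - b), ?_, ?_⟩
    · show aL ⬝ᵥ relu (A.mulVec (A⁻¹.mulVec (z - b)) + b) + bL = 0
      have hAz : A.mulVec (A⁻¹.mulVec (z - b)) + b = z := by
        rw [Matrix.mulVec_mulVec, Matrix.mul_nonsing_inv A hA]
        simp
      rw [hAz]
      have hrz : relu z = y := by
        funext k
        simp only [relu, hz, hyd, y_apply]
        by_cases h : k ∈ J
        · simp [h, max_eq_left (hβpos k h).le]
        · simp [h]
      rw [hrz, hyd, dot_y]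
      have : ∑ i ∈ J, aL i * β i = aL j * c + ∑ i ∈ J.erase j, aL i * β i := by
        rw [← Finset.add_sum_erase _ _ hj]
        simp [hβ]
      rw [this]
      have h2 : ∑ i ∈ J.erase j, aL i * β i = ε * S := by
        rw [hS, Finset.mul_sum]
        apply Finset.sum_congr rfl
        intro i hi
        have : i ≠ j := Finset.ne_of_mem_erase hi
        simp [hβ, this, mul_comm]
      rw [h2, hc]
      field_simp
      ring
    · show _ ∈ canonicalSector J
      exact ⟨β, hβpos, by
        have hAz : A.mulVec (A⁻¹.mulVec (z - b)) + b = z := by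
          rw [Matrix.mulVec_mulVec, Matrix.mul_nonsing_inv A hA]
          simp
        show relu (A.mulVec (A⁻¹.mulVec (z - b)) + b) = _
        rw [hAz]
        funext k
        simp only [relu, hz, y_apply]
        by_cases h : k ∈ J
        · simp [h, max_eq_left (hβpos k h).le]
        · simp [h]⟩
end

section
/- With the hypotheses of the shallow network setting (A invertible, L(y) = âᴸ·y + b̂ᴸ with b̂ᴸ < 0, all âᴸ_i ≠ 0, t_i = -b̂ᴸ/âᴸ_i), the number of subsets J ⊆ {1,...,d} such that T^{-1}(ker(L) ∩ Ŝ_{(J,∅)}) is nonempty equals 2^d − 2^m, where m = |{i : t_i < 0}|. -/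
open Matrix Finset

lemma dot_sum_single {d : ℕ} (aL β : Fin d → ℝ) (J : Finset (Fin d)) :
    aL ⬝ᵥ (∑ i ∈ J, β i • (Pi.single i (1:ℝ) : Fin d → ℝ)) = ∑ i ∈ J, β i * aL i := by
  simp only [dotProduct, Finset.sum_apply, Pi.smul_apply, smul_eq_mul, Finset.mul_sum]
  rw [Finset.sum_comm]
  refine Finset.sum_congr rfl fun i _ => ?_
  simp [Pi.single_apply, mul_ite, mul_comm]

theorem stmt18 {d : ℕ} (A : Matrix (Fin d) (Fin d) ℝ) (hA : IsUnit A.det)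
    (b : Fin d → ℝ) (aL : Fin d → ℝ) (bL : ℝ) (hbL : bL < 0)
    (haL : ∀ i, aL i ≠ 0) (t : Fin d → ℝ) (ht : ∀ i, t i = -bL / aL i) :
    { J : Finset (Fin d) | ((fun x => relu (A.mulVec x + b)) ⁻¹'
        ({ y | aL ⬝ᵥ y + bL = 0 } ∩ canonicalSector J)).Nonempty }.ncard
      = 2 ^ d - 2 ^ (Finset.univ.filter (fun i => t i < 0)).card := by
  have hbL' : 0 < -bL := by linarith
  set N : Finset (Fin d) := Finset.univ.filter (fun i => t i < 0) with hN
  have hmemN : ∀ i : Fin d, i ∈ N ↔ aL i < 0 := by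
    intro i
    simp only [hN, Finset.mem_filter, Finset.mem_univ, true_and, ht i]
    constructor
    · intro h
      by_contra hpos
      have : 0 < aL i := lt_of_le_of_ne (not_lt.1 hpos) (Ne.symm (haL i))
      have := div_pos hbL' this
      linarith
    · intro h
      exact div_neg_of_pos_of_neg hbL' h
  have hkey : { J : Finset (Fin d) | ((fun x => relu (A.mulVec x + b)) ⁻¹'
        ({ y | aL ⬝ᵥ y + bL = 0 } ∩ canonicalSector J)).Nonempty }
      = { J : Finset (Fin d) | ¬ J ⊆ N } := by
    ext J
    simp only [Set.mem_setOf_eq]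
    constructor
    · rintro ⟨x, hx⟩
      simp only [Set.mem_preimage, Set.mem_inter_iff, Set.mem_setOf_eq,
        canonicalSector] at hx
      obtain ⟨hline, β, hβpos, hy⟩ := hx
      rw [hy, dot_sum_single] at hline
      have hsum : ∑ i ∈ J, β i * aL i = -bL := by linarith
      intro hJN
      have : ∑ i ∈ J, β i * aL i ≤ 0 := by
        apply Finset.sum_nonpos
        intro i hi
        have h1 := hβpos i hi
        have h2 := (hmemN i).1 (hJN hi)
        nlinarith
      linarith
    · intro hJN
      obtain ⟨i₀, hi₀J, hi₀⟩ := Finset.not_subset.1 hJN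
      have hai₀ : 0 < aL i₀ := by
        rcases lt_or_gt_of_ne (haL i₀) with h | h
        · exact absurd ((hmemN i₀).2 h) hi₀
        · exact h
      set M : ℝ := ∑ i ∈ J.erase i₀, |aL i| with hM
      have hM0 : 0 ≤ M := Finset.sum_nonneg fun i _ => abs_nonneg _
      set ε : ℝ := (-bL) / (2 * (M + 1)) with hε
      have hε0 : 0 < ε := div_pos hbL' (by linarith)
      have hS : |∑ i ∈ J.erase i₀, aL i * ε| ≤ M * ε := by
        calc |∑ i ∈ J.erase i₀, aL i * ε| ≤ ∑ i ∈ J.erase i₀, |aL i * ε| :=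
              Finset.abs_sum_le_sum_abs _ _
          _ = ∑ i ∈ J.erase i₀, |aL i| * ε := by
              refine Finset.sum_congr rfl fun i _ => ?_
              rw [abs_mul, abs_of_pos hε0]
          _ = M * ε := (Finset.sum_mul _ _ _).symm
      have hMε : M * ε ≤ (-bL) / 2 := by
        rw [hε, ← mul_div_assoc]
        rw [div_le_div_iff₀ (by linarith) (by norm_num : (0:ℝ) < 2)]
        nlinarith
      have hrem : 0 < -bL - ∑ i ∈ J.erase i₀, aL i * ε := by
        have := (abs_le.1 hS).2
        linarith
      set β : Fin d → ℝ := fun i =>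
        if i = i₀ then (-bL - ∑ i ∈ J.erase i₀, aL i * ε) / aL i₀ else ε with hβ
      have hβpos : ∀ i ∈ J, 0 < β i := by
        intro i _
        simp only [hβ]
        split
        · exact div_pos hrem hai₀
        · exact hε0
      set y : Fin d → ℝ := ∑ i ∈ J, β i • (Pi.single i (1:ℝ) : Fin d → ℝ) with hy
      have hyline : aL ⬝ᵥ y + bL = 0 := by
        rw [hy, dot_sum_single]
        have hsplit : ∑ i ∈ J, β i * aL i = β i₀ * aL i₀ + ∑ i ∈ J.erase i₀, β i * aL i :=
          (Finset.add_sum_erase _ _ hi₀J).symm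
        rw [hsplit]
        have h1 : β i₀ = (-bL - ∑ i ∈ J.erase i₀, aL i * ε) / aL i₀ := by simp [hβ]
        have h2 : ∑ i ∈ J.erase i₀, β i * aL i = ∑ i ∈ J.erase i₀, aL i * ε := by
          refine Finset.sum_congr rfl fun i hi => ?_
          have hne : i ≠ i₀ := Finset.ne_of_mem_erase hi
          simp [hβ, hne, mul_comm]
        rw [h1, h2, div_mul_cancel₀ _ (haL i₀)]
        ring
      have hynn : ∀ i, 0 ≤ y i := by
        intro i
        rw [hy, Finset.sum_apply]
        apply Finset.sum_nonneg
        intro j hj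
        have hb := (hβpos j hj).le
        simp only [Pi.smul_apply, smul_eq_mul, Pi.single_apply]
        split
        · simpa using hb
        · simp
      set x₀ : Fin d → ℝ := A⁻¹.mulVec (y - b) with hx₀
      have hAx : A.mulVec x₀ + b = y := by
        rw [hx₀, Matrix.mulVec_mulVec, Matrix.mul_nonsing_inv _ hA, Matrix.one_mulVec]
        simp
      have hrelu : relu (A.mulVec x₀ + b) = y := by
        rw [hAx]
        funext i
        exact max_eq_left (hynn i)
      refine ⟨x₀, ?_, ?_⟩
      · show relu (A.mulVec x₀ + b) ∈ {y | aL ⬝ᵥ y + bL = 0}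
        rw [Set.mem_setOf_eq, hrelu]
        exact hyline
      · show relu (A.mulVec x₀ + b) ∈ canonicalSector J
        rw [hrelu]
        exact ⟨β, hβpos, hy⟩
  rw [hkey]
  have hset : { J : Finset (Fin d) | ¬ J ⊆ N } =
      ↑(Finset.univ.filter (fun J : Finset (Fin d) => ¬ J ⊆ N)) := by
    ext J; simp
  rw [hset, Set.ncard_coe_finset, Finset.filter_not,
    Finset.card_sdiff_of_subset (Finset.filter_subset _ _)]
  have h1 : (Finset.univ : Finset (Finset (Fin d))).card = 2 ^ d := by
    simp [Fintype.card_finset]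
  have h2 : (Finset.univ.filter (fun J : Finset (Fin d) => J ⊆ N)) = N.powerset := by
    ext J; simp
  rw [h1, h2, Finset.card_powerset]
end

section
/- Let Γ be the decision boundary of a shallow network F = L ∘ T (with A invertible, all t_i ≠ 0, m = |{i : t_i < 0}| < d), and let Γ̂_m be the canonical decision boundary obtained with A = Id, b = 0 and hyperplane with intersection values t'_i = -1 for i ≤ m and t'_i = 1 for i > m. Then the invertible affine map M(x) = x_0 + A^{-1} D Q_σ x, where D = diag(|t_i|) and Q_σ is the permutation matrix sorting the t_i in increasing order, satisfies M(Γ̂_m) = Γ. -/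
open Matrix Finset

lemma relu_mem_canonicalSector {d : ℕ} (x : Fin d → ℝ) :
    ∃ J : Finset (Fin d), relu x ∈ canonicalSector J := by
  refine ⟨univ.filter (fun i => 0 < relu x i), relu x,
    fun i hi => (mem_filter.mp hi).2, ?_⟩
  funext j
  rw [Finset.sum_apply]
  have h1 : ∀ i ∈ univ.filter (fun i => 0 < relu x i),
      (relu x i • (Pi.single i (1:ℝ) : Fin d → ℝ)) j
      = if i = j then relu x i else 0 := by
    intro i _
    by_cases h : i = j <;> simp [Pi.single_apply, h]
  rw [Finset.sum_congr rfl h1, Finset.sum_ite_eq']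
  by_cases hj : 0 < relu x j
  · simp [hj]
  · have : relu x j = 0 := le_antisymm (not_lt.mp hj) (le_max_right _ _)
    simp [hj, this]

theorem stmt19 {d : ℕ} (A : Matrix (Fin d) (Fin d) ℝ) (hA : IsUnit A.det)
    (b : Fin d → ℝ) (aL : Fin d → ℝ) (bL : ℝ) (hbL : bL < 0)
    (haL : ∀ i, aL i ≠ 0) (t : Fin d → ℝ) (ht : ∀ i, t i = -bL / aL i)
    (m : ℕ) (hm : m = (Finset.univ.filter (fun i => t i < 0)).card) (hmd : m < d)
    (t' : Fin d → ℝ) (ht' : ∀ i : Fin d, t' i = if (i : ℕ) < m then -1 else 1)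
    (σ : Equiv.Perm (Fin d)) (hσ : ∀ i j : Fin d, i ≤ j → t (σ i) ≤ t (σ j))
    (x₀ : Fin d → ℝ) (hx₀ : x₀ = -(A⁻¹.mulVec b))
    (M : (Fin d → ℝ) → (Fin d → ℝ))
    (hM : ∀ x, M x = x₀ + A⁻¹.mulVec (fun i => |t i| * x (σ.symm i))) :
    M '' (⋃ J : Finset (Fin d),
        relu ⁻¹' ({ y | ∑ i, y i / t' i = 1 } ∩ canonicalSector J))
      = { x | aL ⬝ᵥ relu (A.mulVec x + b) + bL = 0 } := by
  have hbL0 : bL ≠ 0 := ne_of_lt hbL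
  have ht0 : ∀ i, t i ≠ 0 := by
    intro i; rw [ht i]; exact div_ne_zero (by linarith) (haL i)
  have haLt : ∀ i, aL i * t i = -bL := by
    intro i; rw [ht i, mul_comm, div_mul_cancel₀ _ (haL i)]
  -- cardinality of negatives among sorted values
  have hcard : (univ.filter (fun j => t (σ j) < 0)).card = m := by
    rw [hm]
    apply Finset.card_bij (fun j _ => σ j)
    · intro a ha; simp only [mem_filter, mem_univ, true_and] at ha ⊢; exact ha
    · intro a _ c _ h; exact σ.injective h
    · intro i hi
      simp only [mem_filter, mem_univ, true_and] at hi
      exact ⟨σ.symm i, by simp [hi], by simp⟩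
  have hsgn : ∀ j : Fin d, t (σ j) < 0 ↔ (j : ℕ) < m := by
    intro j
    constructor
    · intro hneg
      by_contra hge
      push_neg at hge
      have hsub : Finset.Iic j ⊆ univ.filter (fun k => t (σ k) < 0) := by
        intro k hk
        simp only [mem_filter, mem_univ, true_and]
        exact lt_of_le_of_lt (hσ k j (Finset.mem_Iic.mp hk)) hneg
      have hle := Finset.card_le_card hsub
      rw [Fin.card_Iic, hcard] at hle
      omega
    · intro hlt
      by_contra hnn
      push_neg at hnn
      have hsub : univ.filter (fun k => t (σ k) < 0) ⊆ Finset.Iio j := by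
        intro k hk
        simp only [mem_filter, mem_univ, true_and] at hk
        rw [Finset.mem_Iio]
        by_contra hge
        push_neg at hge
        exact absurd (hσ j k hge) (by linarith)
      have hle := Finset.card_le_card hsub
      rw [hcard, Fin.card_Iio] at hle
      omega
  -- affine computation
  have hw : ∀ x : Fin d → ℝ,
      A.mulVec (M x) + b = fun i => |t i| * x (σ.symm i) := by
    intro x
    rw [hM, hx₀]
    rw [Matrix.mulVec_add, Matrix.mulVec_neg, Matrix.mulVec_mulVec, Matrix.mulVec_mulVec,
      Matrix.mul_nonsing_inv A hA, Matrix.one_mulVec]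
    funext i
    simp
  have hrelu : ∀ x : Fin d → ℝ,
      relu (A.mulVec (M x) + b) = fun i => |t i| * relu x (σ.symm i) := by
    intro x
    rw [hw x]
    funext i
    simp only [relu]
    have h := mul_max_of_nonneg (x (σ.symm i)) 0 (abs_nonneg (t i))
    rw [mul_zero] at h
    exact h.symm
  -- key equivalence
  have hkey : ∀ x : Fin d → ℝ,
      (aL ⬝ᵥ relu (A.mulVec (M x) + b) + bL = 0 ↔ ∑ i, relu x i / t' i = 1) := by
    intro x
    rw [hrelu x]
    have hsum : (aL ⬝ᵥ fun i => |t i| * relu x (σ.symm i))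
        = -bL * ∑ j, relu x j / t' j := by
      rw [dotProduct,
        ← Equiv.sum_comp σ (fun i => aL i * (|t i| * relu x (σ.symm i))), Finset.mul_sum]
      apply Finset.sum_congr rfl
      intro j _
      rw [Equiv.symm_apply_apply]
      have h1 := haLt (σ j)
      by_cases hjm : (j : ℕ) < m
      · have hneg : t (σ j) < 0 := (hsgn j).mpr hjm
        rw [ht' j, if_pos hjm, abs_of_neg hneg]
        have : relu x j / (-1 : ℝ) = -(relu x j) := by ring
        rw [this]
        linear_combination (-(relu x j)) * h1
      · have hpos : 0 < t (σ j) :=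
          lt_of_le_of_ne (not_lt.mp (fun h => hjm ((hsgn j).mp h))) (Ne.symm (ht0 _))
        rw [ht' j, if_neg hjm, abs_of_pos hpos, div_one]
        linear_combination (relu x j) * h1
    rw [hsum]
    constructor
    · intro h
      have h2 : bL * (1 - ∑ j, relu x j / t' j) = 0 := by linarith
      rcases mul_eq_zero.mp h2 with h3 | h3
      · exact absurd h3 hbL0
      · linarith
    · intro h; rw [h]; ring
  -- union simplification
  have hU : ∀ x : Fin d → ℝ,
      (x ∈ ⋃ J : Finset (Fin d),
        relu ⁻¹' ({ y | ∑ i, y i / t' i = 1 } ∩ canonicalSector J))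
      ↔ ∑ i, relu x i / t' i = 1 := by
    intro x
    simp only [Set.mem_iUnion, Set.mem_preimage, Set.mem_inter_iff, Set.mem_setOf_eq]
    constructor
    · rintro ⟨J, h1, _⟩; exact h1
    · intro h
      obtain ⟨J, hJ⟩ := relu_mem_canonicalSector x
      exact ⟨J, h, hJ⟩
  -- inverse of M
  have hMN : ∀ z : Fin d → ℝ,
      M (fun j => (A.mulVec (z - x₀)) (σ j) / |t (σ j)|) = z := by
    intro z
    rw [hM]
    have h1 : (fun i => |t i| * ((A.mulVec (z - x₀)) (σ (σ.symm i)) / |t (σ (σ.symm i))|))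
        = A.mulVec (z - x₀) := by
      funext i
      rw [Equiv.apply_symm_apply, mul_comm, div_mul_cancel₀ _ (abs_ne_zero.mpr (ht0 i))]
    rw [h1, Matrix.mulVec_mulVec, Matrix.nonsing_inv_mul A hA, Matrix.one_mulVec]
    funext i; simp
  ext z
  simp only [Set.mem_image, Set.mem_setOf_eq]
  constructor
  · rintro ⟨x, hx, rfl⟩
    exact (hkey x).mpr ((hU x).mp hx)
  · intro hz
    refine ⟨fun j => (A.mulVec (z - x₀)) (σ j) / |t (σ j)|, ?_, hMN z⟩
    refine (hU _).mpr ((hkey _).mp ?_)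
    rw [hMN z]
    exact hz
end
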